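/- In the group G = ⟨a, b | a³ = 1, b² = 1⟩ ≅ ℤ/3ℤ ∗ ℤ/2ℤ ≅ PSL(2,ℤ), the element w = a·a·b·a·b lies in the commutator subgroup [G,G] and satisfies scl_G(w) = 0. -/

import Mathlib

open scoped commutatorElement

/-- Commutator length: least `n` such that `w` is a product of `n` commutators. -/
noncomputable def cl {G : Type*} [Group G] (w : G) : ℕ :=
  sInf {n : ℕ | ∃ f g : Fin n → G, w = (List.ofFn fun i => ⁅f i, g i⁆).prod}

/-- Stable commutator length, defined as `inf_{n ≥ 1} cl(wⁿ)/n`. -/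
noncomputable def scl {G : Type*} [Group G] (w : G) : ℝ :=
  ⨅ n : ℕ+, (cl (w ^ (n : ℕ)) : ℝ) / (n : ℕ)

/-!
Since `b² = 1`, the word `w = a²bab = a⁻¹bab` is the commutator `⁅a⁻¹, b⁆`, and conjugating a
commutator `⁅x, y⁆` by an involution `y` gives `⁅y, x⁆ = ⁅x, y⁆⁻¹`. If `g w g⁻¹ = w⁻¹`, then
`w²ⁿ = wⁿ · g w⁻ⁿ g⁻¹ = ⁅wⁿ, g⁆`, so `cl (w²ⁿ) ≤ 1` and `scl w ≤ 1 / 2n` for every `n`.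
-/

section StableCommutatorLength

variable {G : Type*} [Group G]

lemma cl_commutatorElement_le_one (x y : G) : cl ⁅x, y⁆ ≤ 1 :=
  Nat.sInf_le ⟨fun _ => x, fun _ => y, by simp⟩

lemma scl_nonneg (w : G) : 0 ≤ scl w :=
  le_ciInf fun _ => by positivity

lemma scl_le_cl_pow_div (w : G) (n : ℕ+) : scl w ≤ cl (w ^ (n : ℕ)) / (n : ℕ) :=
  ciInf_le ⟨0, by rintro _ ⟨m, rfl⟩; positivity⟩ n

lemma pow_two_mul_eq_commutatorElement_of_conj_eq_inv {w g : G} (hg : g * w * g⁻¹ = w⁻¹)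
    (n : ℕ) : w ^ (2 * n) = ⁅w ^ n, g⁆ := by
  have hconj : g * (w ^ n)⁻¹ * g⁻¹ = w ^ n := by
    rw [← conj_inv, ← conj_pow, hg, inv_pow, inv_inv]
  rw [commutatorElement_def, mul_assoc, mul_assoc, ← mul_assoc g, hconj, two_mul, pow_add]

lemma scl_eq_zero_of_conj_eq_inv {w g : G} (hg : g * w * g⁻¹ = w⁻¹) : scl w = 0 := by
  have hle : ∀ n : ℕ, scl w ≤ 1 / (n + 1) := fun n => by
    have hcl := pow_two_mul_eq_commutatorElement_of_conj_eq_inv hg (n + 1) ▸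
      cl_commutatorElement_le_one (w ^ (n + 1)) g
    calc scl w ≤ cl (w ^ (2 * (n + 1))) / (2 * (n + 1) : ℕ) :=
          scl_le_cl_pow_div w ⟨2 * (n + 1), by positivity⟩
      _ ≤ 1 / (n + 1) := by
          rw [div_le_div_iff₀ (by positivity) (by positivity)]
          push_cast
          nlinarith [show (cl (w ^ (2 * (n + 1))) : ℝ) ≤ 1 by exact_mod_cast hcl]
  refine le_antisymm (le_of_forall_pos_lt_add fun ε hε => ?_) (scl_nonneg w)
  obtain ⟨n, hn⟩ := exists_nat_one_div_lt hε
  linarith [hle n]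

lemma conj_commutatorElement_of_mul_self_eq_one {x y : G} (hy : y * y = 1) :
    y * ⁅x, y⁆ * y⁻¹ = ⁅x, y⁆⁻¹ := by
  have hy' : y⁻¹ = y := inv_eq_of_mul_eq_one_right hy
  rw [commutatorElement_inv]
  simp only [commutatorElement_def, hy', mul_assoc, hy, mul_one]

lemma scl_commutatorElement_of_mul_self_eq_one {x y : G} (hy : y * y = 1) : scl ⁅x, y⁆ = 0 :=
  scl_eq_zero_of_conj_eq_inv (conj_commutatorElement_of_mul_self_eq_one hy)

end StableCommutatorLength

theorem stmt_10 :
    let rels : Set (FreeGroup Bool) :=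
      {FreeGroup.of true ^ 3, FreeGroup.of false ^ 2}
    let G := PresentedGroup rels
    let a : G := PresentedGroup.of true
    let b : G := PresentedGroup.of false
    a * a * b * a * b ∈ commutator G ∧ scl (a * a * b * a * b) = 0 := by
  intro rels G a b
  have ha : a ^ 3 = 1 := PresentedGroup.one_of_mem (Or.inl rfl)
  have hb : b * b = 1 := by
    rw [← pow_two]
    exact PresentedGroup.one_of_mem (Or.inr rfl)
  have hw : a * a * b * a * b = ⁅a⁻¹, b⁆ := by
    rw [commutatorElement_def, inv_inv, inv_eq_of_mul_eq_one_right hb,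
      inv_eq_of_mul_eq_one_right (by rw [← pow_three, ha] : a * (a * a) = 1)]
  rw [hw, commutator_def]
  exact ⟨Subgroup.commutator_mem_commutator trivial trivial,
    scl_commutatorElement_of_mul_self_eq_one hb⟩
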